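/- Fix σ > 0 and c ∈ ℝ. The function μ ↦ P(μ, σ, c) is strictly increasing on (c, ∞): if c < μ < μ' then P(μ, σ, c) < P(μ', σ, c). -/
import Mathlib


open Real MeasureTheory Filter Topology

/-- Standard normal density φ(x) = exp(-x²/2)/√(2π). -/
noncomputable def stdPdf (x : ℝ) : ℝ := Real.exp (-(x ^ 2) / 2) / Real.sqrt (2 * Real.pi)

/-- Standard normal CDF Φ(x) = ∫_{-∞}^x φ(u) du. -/
noncomputable def stdCdf (x : ℝ) : ℝ := ∫ u in Set.Iio x, stdPdf u

/-- P(μ, σ, c): probability that an agent with prior N(μ, σ²) and link cost c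
is never ostracized (Proposition 1). -/
noncomputable def Pstay (μ σ c : ℝ) : ℝ :=
  ∫ q in Set.Ioi c, (1 - Real.exp (-(2 / σ ^ 2) * (μ - c) * (q - c))) * stdPdf ((q - μ) / σ) / σ

open Set

lemma stdPdf_pos (x : ℝ) : 0 < stdPdf x := by
  unfold stdPdf
  positivity

lemma stdPdf_integrable : Integrable stdPdf := by
  have h : Integrable (fun x : ℝ => Real.exp (-(1/2 : ℝ) * x ^ 2)) :=
    integrable_exp_neg_mul_sq (by norm_num)
  exact (h.div_const (Real.sqrt (2 * Real.pi))).congr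
    (Filter.Eventually.of_forall fun x => by unfold stdPdf; ring_nf)

lemma stdPdf_comp_integrable {σ : ℝ} (hσ : σ ≠ 0) (m : ℝ) :
    Integrable (fun q : ℝ => stdPdf ((q - m) / σ) / σ) := by
  have h1 : Integrable (fun q : ℝ => stdPdf (q * σ⁻¹)) :=
    stdPdf_integrable.comp_mul_right' (inv_ne_zero hσ)
  have h2 : Integrable (fun q : ℝ => stdPdf ((q - m) * σ⁻¹)) := h1.comp_sub_right m
  exact (h2.div_const σ).congr (Filter.Eventually.of_forall fun q => by
    simp only [div_eq_mul_inv])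

lemma integral_comp_add_right_Ioi (g : ℝ → ℝ) (a b : ℝ) :
    (∫ x in Ioi a, g (x + b)) = ∫ x in Ioi (a + b), g x := by
  have key := integral_add_right_eq_self (μ := volume) ((Ioi (a + b)).indicator g) b
  rw [← integral_indicator measurableSet_Ioi, ← integral_indicator measurableSet_Ioi, ← key]
  congr 1
  ext x
  by_cases hx : a < x
  · simp [indicator, hx, (by linarith : a + b < x + b)]
  · simp [indicator, hx, (by intro h; exact hx (by linarith) : ¬ a + b < x + b)]

lemma gauss_shift {σ : ℝ} (hσ : 0 < σ) (m c : ℝ) :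
    (∫ q in Ioi c, stdPdf ((q - m) / σ) / σ) = ∫ u in Ioi ((c - m) / σ), stdPdf u := by
  have h1 : ∀ q : ℝ, stdPdf ((q - m) / σ) / σ = σ⁻¹ • stdPdf ((q + -m) * σ⁻¹) := by
    intro q
    rw [smul_eq_mul, div_eq_mul_inv (q - m) σ, sub_eq_add_neg, div_eq_mul_inv, mul_comm]
  simp_rw [h1]
  rw [integral_smul, integral_comp_add_right_Ioi (fun x => stdPdf (x * σ⁻¹)) c (-m),
    integral_comp_mul_right_Ioi stdPdf (c + -m) (inv_pos.mpr hσ), smul_smul, inv_inv,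
    inv_mul_cancel₀ hσ.ne', one_smul]
  congr 1

lemma tail_eq (a : ℝ) : (∫ u in Ioi a, stdPdf u) = stdCdf (-a) := by
  have heven : ∀ x : ℝ, stdPdf x = stdPdf (-x) := fun x => by unfold stdPdf; rw [neg_pow]; ring_nf
  calc (∫ u in Ioi a, stdPdf u) = ∫ u in Ioi a, stdPdf (-u) := by simp_rw [← heven]
    _ = ∫ u in Iic (-a), stdPdf u := integral_comp_neg_Ioi a stdPdf
    _ = stdCdf (-a) := integral_Iic_eq_integral_Iio

lemma key_identity {σ : ℝ} (hσ : σ ≠ 0) (c μ q : ℝ) :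
    (1 - Real.exp (-(2 / σ ^ 2) * (μ - c) * (q - c))) * stdPdf ((q - μ) / σ) / σ
      = stdPdf ((q - μ) / σ) / σ - stdPdf ((q - (2 * c - μ)) / σ) / σ := by
  have h : Real.exp (-(2 / σ ^ 2) * (μ - c) * (q - c)) * stdPdf ((q - μ) / σ)
      = stdPdf ((q - (2 * c - μ)) / σ) := by
    unfold stdPdf
    rw [show Real.exp (-(2 / σ ^ 2) * (μ - c) * (q - c)) *
        (Real.exp (-(((q - μ) / σ) ^ 2) / 2) / Real.sqrt (2 * Real.pi))
        = Real.exp (-(2 / σ ^ 2) * (μ - c) * (q - c) + -(((q - μ) / σ) ^ 2) / 2) /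
          Real.sqrt (2 * Real.pi) from by rw [Real.exp_add]; ring]
    congr 1
    field_simp
    ring
  rw [← h]
  ring

lemma Pstay_eq {σ : ℝ} (hσ : 0 < σ) (μ c : ℝ) :
    Pstay μ σ c = stdCdf ((μ - c) / σ) - stdCdf ((c - μ) / σ) := by
  have hf1 : IntegrableOn (fun q => stdPdf ((q - μ) / σ) / σ) (Ioi c) :=
    (stdPdf_comp_integrable hσ.ne' μ).integrableOn
  have hf2 : IntegrableOn (fun q => stdPdf ((q - (2 * c - μ)) / σ) / σ) (Ioi c) :=
    (stdPdf_comp_integrable hσ.ne' (2 * c - μ)).integrableOn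
  unfold Pstay
  rw [setIntegral_congr_fun measurableSet_Ioi (fun q _ => key_identity hσ.ne' c μ q),
    integral_sub hf1 hf2, gauss_shift hσ, gauss_shift hσ, tail_eq, tail_eq]
  have e1 : -((c - μ) / σ) = (μ - c) / σ := by ring
  have e2 : -((c - (2 * c - μ)) / σ) = (c - μ) / σ := by ring
  rw [e1, e2]

lemma stdCdf_lt {a b : ℝ} (hab : a < b) : stdCdf a < stdCdf b := by
  have hint := stdPdf_integrable
  have h1 : stdCdf b = stdCdf a + ∫ x in Ico a b, stdPdf x := by
    unfold stdCdf
    rw [← setIntegral_union ((Iio_disjoint_Ici le_rfl).mono_right Ico_subset_Ici_self)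
      measurableSet_Ico hint.integrableOn hint.integrableOn, Iio_union_Ico_eq_Iio hab.le]
  have h2 : 0 < ∫ x in Ico a b, stdPdf x := by
    rw [integral_Ico_eq_integral_Ioo, ← integral_Ioc_eq_integral_Ioo,
      ← intervalIntegral.integral_of_le hab.le]
    exact intervalIntegral.intervalIntegral_pos_of_pos_on hint.intervalIntegrable
      (fun x _ => stdPdf_pos x) hab
  linarith

/-- P(μ, σ, c) is strictly increasing in μ on (c, ∞). -/
theorem stmt_1 (σ c : ℝ) (hσ : 0 < σ) (μ μ' : ℝ) (hμ : c < μ) (hμ' : μ < μ') :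
    Pstay μ σ c < Pstay μ' σ c := by
  rw [Pstay_eq hσ, Pstay_eq hσ]
  have hA : stdCdf ((μ - c) / σ) < stdCdf ((μ' - c) / σ) :=
    stdCdf_lt (by gcongr <;> linarith)
  have hB : stdCdf ((c - μ') / σ) < stdCdf ((c - μ) / σ) :=
    stdCdf_lt (by gcongr <;> linarith)
  linarith
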